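/- Let t > 0 and let γ_t be the Gaussian measure on ℝ with mean 0 and variance t. Then for every s ∈ ℝ and every f ∈ L²(ℝ; ℂ) with ‖f‖_{H^{s+2}} < ∞, the averaged mid-point propagator deviation satisfies ∫_ℝ ‖(S^{mid}_x f) − f‖_{H^s}² dγ_t(x) ≤ t · ‖f‖_{H^{s+2}}² (this is the estimate E‖(½(I+S_{n,δt}) − I)u‖²_{H^s} ≲ δt ‖u‖²_{H^{s+2}} used in the mean-square error analysis of the mid-point scheme, with x playing the role of the Brownian increment δW_n). -/

import Mathlib

open MeasureTheory Complex Real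
open scoped ENNReal NNReal FourierTransform ComplexConjugate

noncomputable section

/-- `L²(ℝ; ℂ)`. -/
abbrev L2 : Type := Lp ℂ 2 (volume : Measure ℝ)

/-- `F` is the Fourier–Plancherel transform on `L²(ℝ; ℂ)`: a unitary operator that agrees
with the Fourier integral `𝓕 f (ξ) = ∫ e^{−2πixξ} f(x) dx` on `L¹ ∩ L²`. -/
def IsFourierPlancherel (F : L2 ≃ₗᵢ[ℂ] L2) : Prop :=
  ∀ (f : ℝ → ℂ) (_ : Integrable f (volume : Measure ℝ))
    (hf2 : MemLp f 2 (volume : Measure ℝ)),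
    (F (hf2.toLp f) : ℝ → ℂ) =ᵐ[volume] 𝓕 f

/-- Multiplication by a bounded continuous symbol maps `L²` to `L²`. -/
lemma memℒp_mul_symbol (m : ℝ → ℂ) (hm : Continuous m) (hm1 : ∀ ξ, ‖m ξ‖ ≤ 1)
    (g : L2) : MemLp (fun ξ => m ξ * (g : ℝ → ℂ) ξ) 2 (volume : Measure ℝ) := by
  refine ⟨hm.aestronglyMeasurable.mul (Lp.aestronglyMeasurable g), ?_⟩
  refine lt_of_le_of_lt (eLpNorm_mono fun x => ?_) (Lp.eLpNorm_lt_top g)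
  rw [norm_mul]
  calc ‖m x‖ * ‖(g : ℝ → ℂ) x‖ ≤ 1 * ‖(g : ℝ → ℂ) x‖ := by
        gcongr; exact hm1 x
    _ = ‖(g : ℝ → ℂ) x‖ := one_mul _

/-- The Fourier multiplier operator `f ↦ 𝓕⁻¹ (m ⬝ 𝓕 f)` with bounded continuous symbol. -/
def fourierMult (F : L2 ≃ₗᵢ[ℂ] L2) (m : ℝ → ℂ) (hm : Continuous m)
    (hm1 : ∀ ξ, ‖m ξ‖ ≤ 1) (f : L2) : L2 :=
  F.symm ((memℒp_mul_symbol m hm hm1 (F f)).toLp _)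

/-- The squared `H^s` norm `‖f‖²_{H^s} = ∫ (1+|ξ|²)^s |𝓕f(ξ)|² dξ ∈ [0,∞]`. -/
def HsNormSq (F : L2 ≃ₗᵢ[ℂ] L2) (s : ℝ) (f : L2) : ℝ≥0∞ :=
  ∫⁻ ξ : ℝ, ENNReal.ofReal ((1 + |ξ| ^ 2) ^ s) * (‖(F f : ℝ → ℂ) ξ‖₊ : ℝ≥0∞) ^ 2

/-- The `H^s` norm `‖f‖_{H^s} ∈ [0,∞]`. -/
def HsNorm (F : L2 ≃ₗᵢ[ℂ] L2) (s : ℝ) (f : L2) : ℝ≥0∞ :=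
  HsNormSq F s f ^ (1 / 2 : ℝ)

lemma Sprop_symbol_cont (τ : ℝ) :
    Continuous fun ξ : ℝ => Complex.exp (-Complex.I * (τ : ℂ) * (ξ : ℂ) ^ 2) := by
  fun_prop

lemma Sprop_symbol_norm (τ : ℝ) (ξ : ℝ) :
    ‖Complex.exp (-Complex.I * (τ : ℂ) * (ξ : ℂ) ^ 2)‖ ≤ 1 := by
  have h : -Complex.I * (τ : ℂ) * (ξ : ℂ) ^ 2 = ((-(τ * ξ ^ 2) : ℝ) : ℂ) * Complex.I := by
    push_cast; ring
  rw [h, Complex.norm_exp_ofReal_mul_I]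

/-- The linear propagator `S_τ = 𝓕⁻¹ e^{−iτ|ξ|²} 𝓕` of `i du + Δu ∘ dW = 0`. -/
def Sprop (F : L2 ≃ₗᵢ[ℂ] L2) (τ : ℝ) : L2 → L2 :=
  fourierMult F (fun ξ : ℝ => Complex.exp (-Complex.I * (τ : ℂ) * (ξ : ℂ) ^ 2))
    (Sprop_symbol_cont τ) (Sprop_symbol_norm τ)

/-- The mid-point symbol `ξ ↦ (1 − i(c/2)ξ²)/(1 + i(c/2)ξ²)`. -/
def midSymb (c : ℝ) (ξ : ℝ) : ℂ :=
  (1 - Complex.I * ((c : ℂ) / 2) * (ξ : ℂ) ^ 2) / (1 + Complex.I * ((c : ℂ) / 2) * (ξ : ℂ) ^ 2)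

lemma add_ne (a : ℝ) : (1 : ℂ) + (a : ℂ) * Complex.I ≠ 0 := by
  intro h
  have := congrArg Complex.re h
  simp at this

lemma sub_ne (a : ℝ) : (1 : ℂ) - (a : ℂ) * Complex.I ≠ 0 := by
  intro h
  have := congrArg Complex.re h
  simp at this

lemma conj_eq (a : ℝ) : (starRingEnd ℂ) ((1 : ℂ) - (a : ℂ) * Complex.I)
    = 1 + (a : ℂ) * Complex.I := by
  rw [map_sub, map_mul, Complex.conj_ofReal, Complex.conj_I, map_one]
  ring

lemma key (c ξ : ℝ) :
    Complex.I * ((c : ℂ) / 2) * (ξ : ℂ) ^ 2 = ((c / 2 * ξ ^ 2 : ℝ) : ℂ) * Complex.I := by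
  push_cast; ring

lemma midSymb_cont (c : ℝ) : Continuous (midSymb c) := by
  unfold midSymb
  apply Continuous.div
  · fun_prop
  · fun_prop
  · intro ξ
    rw [key]
    exact add_ne _

lemma midSymb_norm (c ξ : ℝ) : ‖midSymb c ξ‖ = 1 := by
  unfold midSymb
  rw [key, ← conj_eq, norm_div, Complex.norm_conj, div_self]
  exact norm_ne_zero_iff.mpr (sub_ne _)

/-- The one-step linear mid-point propagator `S^{mid}_c = (I − i(c/2)Δ)⁻¹(I + i(c/2)Δ)`,
realized as the Fourier multiplier with symbol `midSymb c`. -/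
def Smid (F : L2 ≃ₗᵢ[ℂ] L2) (c : ℝ) : L2 → L2 :=
  fourierMult F (midSymb c) (midSymb_cont c) (fun ξ => le_of_eq (midSymb_norm c ξ))

/-!
On the Fourier side `S^{mid}_c f - f` has symbol `m_c - 1`, where `m_c(ξ) = (1 - ia)/(1 + ia)` with
`a = cξ²/2`; since `m_c - 1 = -2ia/(1 + ia)` and `|1 + ia| ≥ 1`, we get `|m_c(ξ) - 1| ≤ |c| ξ²`, hence
`‖S^{mid}_c f - f‖²_{H^s} ≤ c² ‖f‖²_{H^{s+2}}` for every `c`. Averaging over `c ~ γ_t` and using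
`∫ c² dγ_t = t` gives the estimate.
-/

open ProbabilityTheory in
lemma lintegral_ofReal_sq_gaussianReal (v : ℝ≥0) :
    ∫⁻ x : ℝ, ENNReal.ofReal (x ^ 2) ∂(gaussianReal 0 v) = v := by
  have h := ofReal_variance (memLp_id_gaussianReal (μ := 0) (v := v) 2)
  rw [variance_id_gaussianReal, evariance_eq_lintegral_ofReal] at h
  simpa using h.symm

lemma coeFn_fourierMult (F : L2 ≃ₗᵢ[ℂ] L2) (m : ℝ → ℂ) (hm : Continuous m)
    (hm1 : ∀ ξ, ‖m ξ‖ ≤ 1) (f : L2) :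
    (F (fourierMult F m hm hm1 f) : ℝ → ℂ) =ᵐ[volume] fun ξ => m ξ * (F f : ℝ → ℂ) ξ := by
  rw [fourierMult, LinearIsometryEquiv.apply_symm_apply]
  exact MemLp.coeFn_toLp _

lemma coeFn_Smid_sub_self (F : L2 ≃ₗᵢ[ℂ] L2) (c : ℝ) (f : L2) :
    (F (Smid F c f - f) : ℝ → ℂ)
      =ᵐ[volume] fun ξ => (midSymb c ξ - 1) * (F f : ℝ → ℂ) ξ := by
  have hmult : (F (Smid F c f) : ℝ → ℂ) =ᵐ[volume] fun ξ => midSymb c ξ * (F f : ℝ → ℂ) ξ :=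
    coeFn_fourierMult F _ _ _ f
  rw [map_sub]
  filter_upwards [Lp.coeFn_sub (F (Smid F c f)) (F f), hmult] with ξ hsub hSmid
  rw [hsub, Pi.sub_apply, hSmid, sub_mul, one_mul]

lemma norm_div_one_add_mul_I_sub_one_le (a : ℝ) :
    ‖(1 - (a : ℂ) * I) / (1 + (a : ℂ) * I) - 1‖ ≤ 2 * |a| := by
  have hden : 1 ≤ ‖(1 : ℂ) + (a : ℂ) * I‖ := by
    simpa using Complex.abs_re_le_norm ((1 : ℂ) + (a : ℂ) * I)
  have hnum : ‖-2 * ((a : ℂ) * I)‖ = 2 * |a| := by simp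
  rw [div_sub_one (add_ne a), show (1 : ℂ) - a * I - (1 + a * I) = -2 * (a * I) by ring,
    norm_div, hnum]
  exact div_le_self (by positivity) hden

lemma norm_midSymb_sub_one_le (c ξ : ℝ) : ‖midSymb c ξ - 1‖ ≤ |c| * ξ ^ 2 := by
  have h := norm_div_one_add_mul_I_sub_one_le (c / 2 * ξ ^ 2)
  rw [midSymb, key]
  rwa [abs_mul, abs_div, abs_two, abs_of_nonneg (sq_nonneg ξ),
    show 2 * (|c| / 2 * ξ ^ 2) = |c| * ξ ^ 2 by ring] at h

lemma HsNormSq_le_of_ae_norm_le (F : L2 ≃ₗᵢ[ℂ] L2) (s C : ℝ) (f g : L2)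
    (h : ∀ᵐ ξ, ‖(F g : ℝ → ℂ) ξ‖ ≤ C * (1 + |ξ| ^ 2) * ‖(F f : ℝ → ℂ) ξ‖) :
    HsNormSq F s g ≤ ENNReal.ofReal (C ^ 2) * HsNormSq F (s + 2) f := by
  rw [HsNormSq, HsNormSq, ← lintegral_const_mul' _ _ ENNReal.ofReal_ne_top]
  refine lintegral_mono_ae (h.mono fun ξ hξ => ?_)
  have hw : 0 < 1 + |ξ| ^ 2 := by positivity
  have hsq : ‖(F g : ℝ → ℂ) ξ‖ ^ 2 ≤ C ^ 2 * (1 + |ξ| ^ 2) ^ 2 * ‖(F f : ℝ → ℂ) ξ‖ ^ 2 := by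
    rw [← mul_pow, ← mul_pow]
    exact pow_le_pow_left₀ (norm_nonneg _) hξ 2
  simp only [← ofReal_norm, ← enorm_eq_nnnorm, ← ENNReal.ofReal_pow (norm_nonneg _),
    ← ENNReal.ofReal_mul (Real.rpow_nonneg hw.le _), ← ENNReal.ofReal_mul (sq_nonneg C)]
  refine ENNReal.ofReal_le_ofReal ?_
  rw [Real.rpow_add hw, Real.rpow_two]
  calc (1 + |ξ| ^ 2) ^ s * ‖(F g : ℝ → ℂ) ξ‖ ^ 2
      ≤ (1 + |ξ| ^ 2) ^ s * (C ^ 2 * (1 + |ξ| ^ 2) ^ 2 * ‖(F f : ℝ → ℂ) ξ‖ ^ 2) :=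
        mul_le_mul_of_nonneg_left hsq (Real.rpow_nonneg hw.le s)
    _ = C ^ 2 * ((1 + |ξ| ^ 2) ^ s * (1 + |ξ| ^ 2) ^ 2 * ‖(F f : ℝ → ℂ) ξ‖ ^ 2) := by ring

lemma HsNormSq_Smid_sub_self_le (F : L2 ≃ₗᵢ[ℂ] L2) (s c : ℝ) (f : L2) :
    HsNormSq F s (Smid F c f - f) ≤ ENNReal.ofReal (c ^ 2) * HsNormSq F (s + 2) f := by
  rw [← sq_abs c]
  refine HsNormSq_le_of_ae_norm_le F s |c| f _ ?_
  filter_upwards [coeFn_Smid_sub_self F c f] with ξ hξ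
  rw [hξ, norm_mul]
  gcongr
  calc ‖midSymb c ξ - 1‖ ≤ |c| * ξ ^ 2 := norm_midSymb_sub_one_le c ξ
    _ ≤ |c| * (1 + |ξ| ^ 2) := by gcongr; rw [sq_abs]; linarith

open ProbabilityTheory in
theorem stmt_6_general (F : L2 ≃ₗᵢ[ℂ] L2)
    (t : ℝ) (s : ℝ) (f : L2) :
    ∫⁻ x : ℝ, HsNormSq F s (Smid F x f - f) ∂(gaussianReal 0 t.toNNReal)
      ≤ ENNReal.ofReal t * HsNormSq F (s + 2) f := by
  calc ∫⁻ x : ℝ, HsNormSq F s (Smid F x f - f) ∂(gaussianReal 0 t.toNNReal)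
      ≤ ∫⁻ x : ℝ, ENNReal.ofReal (x ^ 2) * HsNormSq F (s + 2) f ∂(gaussianReal 0 t.toNNReal) :=
        lintegral_mono fun x => HsNormSq_Smid_sub_self_le F s x f
    _ = ENNReal.ofReal t * HsNormSq F (s + 2) f := by
        rw [lintegral_mul_const _ (by fun_prop), lintegral_ofReal_sq_gaussianReal]
        rfl

open ProbabilityTheory in
/-- for the centered Gaussian measure `γ_t` with variance `t > 0` and any
`f` with finite `H^{s+2}` norm, the averaged mid-point propagator deviation satisfies
`∫ ‖S^{mid}_x f − f‖²_{H^s} dγ_t(x) ≤ t ‖f‖²_{H^{s+2}}`. -/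
theorem stmt_6 (F : L2 ≃ₗᵢ[ℂ] L2) (hF : IsFourierPlancherel F)
    (t : ℝ) (ht : 0 < t) (s : ℝ) (f : L2) (hf : HsNorm F (s + 2) f < ⊤) :
    ∫⁻ x : ℝ, HsNormSq F s (Smid F x f - f) ∂(gaussianReal 0 t.toNNReal)
      ≤ ENNReal.ofReal t * HsNormSq F (s + 2) f :=
  stmt_6_general F t s f

end
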